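/- Let G be a graph and let P1, P2 be vertex-disjoint paths in G. Suppose a1, a2, a3 are three consecutive vertices of P1 and b1, b2, b3 are three consecutive vertices of P2 such that a2 is adjacent to both b1 and b3, and b2 is adjacent to both a1 and a3. Then the sequences obtained from P1 by replacing a2 with b2 and from P2 by replacing b2 with a2 are again vertex-disjoint paths in G, with the same vertex sets' union, same lengths, and same endpoints as P1 and P2. -/

import Mathlib

/-!
Moving the middle vertex of `s ++ a :: x :: c :: t` to the front is a permutation, so
duplicate-freeness, disjointness and the joint vertex set only need to be checked for
the head swap `x :: r, y :: q ↦ y :: r, x :: q`. Adjacency changes only at the two edges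
around the exchanged vertex, and these are exactly the given cross adjacencies.
-/

namespace List

variable {α : Type*}

theorem mid_perm_cons (s t : List α) (a x c : α) :
    s ++ a :: x :: c :: t ~ x :: (s ++ a :: c :: t) := by
  simpa using perm_middle (l₁ := s ++ [a]) (l₂ := c :: t) (a := x)

theorem IsChain.replace_mid {R : α → α → Prop} {s t : List α} {a x y c : α}
    (h : IsChain R (s ++ a :: x :: c :: t)) (hay : R a y) (hyc : R y c) :
    IsChain R (s ++ a :: y :: c :: t) := by
  rw [isChain_append, isChain_cons_cons, isChain_cons_cons] at h ⊢
  obtain ⟨hs, ⟨-, -, hct⟩, hjoin⟩ := h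
  exact ⟨hs, ⟨hay, hyc, hct⟩, by simpa using hjoin⟩

theorem replace_mid_length_head?_getLast? (s t : List α) (a x y c : α) :
    (s ++ a :: y :: c :: t).length = (s ++ a :: x :: c :: t).length ∧
    (s ++ a :: y :: c :: t).head? = (s ++ a :: x :: c :: t).head? ∧
    (s ++ a :: y :: c :: t).getLast? = (s ++ a :: x :: c :: t).getLast? :=
  ⟨by simp, by cases s <;> rfl, by simp [getLast?_append]⟩

theorem nodup_disjoint_swap_heads {x y : α} {r q : List α} (hr : (x :: r).Nodup)
    (hq : (y :: q).Nodup) (hd : Disjoint (x :: r) (y :: q)) :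
    (y :: r).Nodup ∧ (x :: q).Nodup ∧ Disjoint (y :: r) (x :: q) := by
  simp only [nodup_cons, disjoint_cons_left, disjoint_cons_right, mem_cons, not_or] at *
  tauto

theorem Nodup.exchange_mid {s₁ t₁ s₂ t₂ : List α} {a₁ x c₁ a₂ y c₂ : α}
    (h₁ : (s₁ ++ a₁ :: x :: c₁ :: t₁).Nodup) (h₂ : (s₂ ++ a₂ :: y :: c₂ :: t₂).Nodup)
    (hd : Disjoint (s₁ ++ a₁ :: x :: c₁ :: t₁) (s₂ ++ a₂ :: y :: c₂ :: t₂)) :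
    (s₁ ++ a₁ :: y :: c₁ :: t₁).Nodup ∧ (s₂ ++ a₂ :: x :: c₂ :: t₂).Nodup ∧
      Disjoint (s₁ ++ a₁ :: y :: c₁ :: t₁) (s₂ ++ a₂ :: x :: c₂ :: t₂) := by
  have p₁ := mid_perm_cons s₁ t₁ a₁ x c₁
  have p₂ := mid_perm_cons s₂ t₂ a₂ y c₂
  have p₁' := mid_perm_cons s₁ t₁ a₁ y c₁
  have p₂' := mid_perm_cons s₂ t₂ a₂ x c₂
  rw [p₁'.nodup_iff, p₂'.nodup_iff, p₁'.disjoint_left, p₂'.disjoint_right]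
  exact nodup_disjoint_swap_heads (p₁.nodup_iff.1 h₁) (p₂.nodup_iff.1 h₂)
    ((p₂.disjoint_right).1 ((p₁.disjoint_left).1 hd))

theorem toFinset_union_exchange_mid [DecidableEq α] (s₁ t₁ s₂ t₂ : List α)
    (a₁ x c₁ a₂ y c₂ : α) :
    (s₁ ++ a₁ :: y :: c₁ :: t₁).toFinset ∪ (s₂ ++ a₂ :: x :: c₂ :: t₂).toFinset =
      (s₁ ++ a₁ :: x :: c₁ :: t₁).toFinset ∪ (s₂ ++ a₂ :: y :: c₂ :: t₂).toFinset := by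
  ext z
  simp only [Finset.mem_union, mem_toFinset, (mid_perm_cons _ _ _ _ _).mem_iff, mem_cons]
  tauto

end List

open List in
/-- The exchange operation: swapping the middle vertices `a2` and `b2` between two
vertex-disjoint paths (given the cross adjacencies) yields again two vertex-disjoint
paths with the same union of vertex sets, same lengths and same endpoints. Paths are
modeled as nodup lists whose consecutive elements are adjacent. -/
theorem stmt10 {V : Type*} [DecidableEq V] (G : SimpleGraph V)
    (s1 t1 s2 t2 : List V) (a1 a2 a3 b1 b2 b3 : V)
    (L1 L2 : List V)
    (hL1 : L1 = s1 ++ a1 :: a2 :: a3 :: t1)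
    (hL2 : L2 = s2 ++ b1 :: b2 :: b3 :: t2)
    (hc1 : L1.Chain' G.Adj) (hn1 : L1.Nodup)
    (hc2 : L2.Chain' G.Adj) (hn2 : L2.Nodup)
    (hdisj : ∀ x ∈ L1, x ∉ L2)
    (h1 : G.Adj a2 b1) (h2 : G.Adj a2 b3)
    (h3 : G.Adj b2 a1) (h4 : G.Adj b2 a3) :
    (s1 ++ a1 :: b2 :: a3 :: t1).Chain' G.Adj ∧ (s1 ++ a1 :: b2 :: a3 :: t1).Nodup ∧
    (s2 ++ b1 :: a2 :: b3 :: t2).Chain' G.Adj ∧ (s2 ++ b1 :: a2 :: b3 :: t2).Nodup ∧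
    (∀ x ∈ (s1 ++ a1 :: b2 :: a3 :: t1), x ∉ (s2 ++ b1 :: a2 :: b3 :: t2)) ∧
    (s1 ++ a1 :: b2 :: a3 :: t1).toFinset ∪ (s2 ++ b1 :: a2 :: b3 :: t2).toFinset
      = L1.toFinset ∪ L2.toFinset ∧
    (s1 ++ a1 :: b2 :: a3 :: t1).length = L1.length ∧
    (s2 ++ b1 :: a2 :: b3 :: t2).length = L2.length ∧
    (s1 ++ a1 :: b2 :: a3 :: t1).head? = L1.head? ∧
    (s1 ++ a1 :: b2 :: a3 :: t1).getLast? = L1.getLast? ∧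
    (s2 ++ b1 :: a2 :: b3 :: t2).head? = L2.head? ∧
    (s2 ++ b1 :: a2 :: b3 :: t2).getLast? = L2.getLast? := by
  subst hL1 hL2
  obtain ⟨hn1', hn2', hdisj'⟩ := hn1.exchange_mid hn2 fun x hx₁ hx₂ => hdisj x hx₁ hx₂
  obtain ⟨len1, head1, last1⟩ := replace_mid_length_head?_getLast? s1 t1 a1 a2 b2 a3
  obtain ⟨len2, head2, last2⟩ := replace_mid_length_head?_getLast? s2 t2 b1 b2 a2 b3
  exact ⟨hc1.replace_mid h3.symm h4, hn1', hc2.replace_mid h1.symm h2, hn2',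
    fun x hx₁ hx₂ => hdisj' hx₁ hx₂, toFinset_union_exchange_mid .., len1, len2, head1, last1,
    head2, last2⟩
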